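/- Let M = (E, rk, m) be a quasi-arithmetic matroid and let m̄ be the multiplicity function of its reduction M̄. Then m̄(∅) = m̄(E) = 1 (M̄ is torsion-free and surjective), and M̄ satisfies the strong gcd property: m̄(X) = gcd{ m̄(B) : B a basis with |B ∩ X| = rk(X) } for every X ⊆ E. -/
import Mathlib


open scoped Classical

section Arithmat

variable {E : Type*} [Fintype E] [DecidableEq E]

/-- The rank function axioms of a matroid on ground set `E`. -/
def IsRankFn (rk : Finset E → ℕ) : Prop :=
  (∀ X : Finset E, rk X ≤ X.card) ∧
  (∀ X Y : Finset E, rk (X ∪ Y) + rk (X ∩ Y) ≤ rk X + rk Y) ∧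
  (∀ (X : Finset E) (e : E), rk X ≤ rk (insert e X) ∧ rk (insert e X) ≤ rk X + 1)

/-- `B` is a basis of the matroid: `|B| = rk B = rk E`. -/
def IsBasis (rk : Finset E → ℕ) (B : Finset E) : Prop :=
  B.card = rk B ∧ rk B = rk (Finset.univ : Finset E)

/-- `(X, X ⊔ T ⊔ F)` is a molecule: `X`, `T`, `F` are pairwise disjoint and
`rk Z = rk X + |Z ∩ F|` for every `Z` with `X ⊆ Z ⊆ X ∪ T ∪ F`. -/
def IsMolecule (rk : Finset E → ℕ) (X T F : Finset E) : Prop :=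
  Disjoint X T ∧ Disjoint X F ∧ Disjoint T F ∧
  ∀ Z : Finset E, X ⊆ Z → Z ⊆ X ∪ T ∪ F → rk Z = rk X + (Z ∩ F).card

/-- Axiom (A1) of (quasi-)arithmetic matroids. -/
def AxiomA1 (rk m : Finset E → ℕ) : Prop :=
  ∀ (X : Finset E) (e : E),
    (rk (insert e X) = rk X → m (insert e X) ∣ m X) ∧
    (rk (insert e X) ≠ rk X → m X ∣ m (insert e X))

/-- Axiom (A2) of (quasi-)arithmetic matroids. -/
def AxiomA2 (rk m : Finset E → ℕ) : Prop :=
  ∀ X T F : Finset E, IsMolecule rk X T F →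
    m X * m (X ∪ T ∪ F) = m (X ∪ T) * m (X ∪ F)

/-- Axiom (P) of arithmetic matroids.  The sign `(-1) ^ (|X ∪ F| - |S|)` is
expressed as `(-1) ^ (|X ∪ F| + |S|)`, which has the same parity. -/
def AxiomP (rk m : Finset E → ℕ) : Prop :=
  ∀ X T F : Finset E, IsMolecule rk X T F →
    0 ≤ ∑ S ∈ Finset.Icc X (X ∪ T ∪ F), (-1 : ℤ) ^ ((X ∪ F).card + S.card) * (m S : ℤ)

/-- A quasi-arithmetic matroid: a matroid rank function together with a positive
multiplicity function satisfying (A1) and (A2). -/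
def IsQuasiArithmeticMatroid (rk m : Finset E → ℕ) : Prop :=
  IsRankFn rk ∧ (∀ X : Finset E, 0 < m X) ∧ AxiomA1 rk m ∧ AxiomA2 rk m

/-- An arithmetic matroid: a matroid rank function together with a positive
multiplicity function satisfying (A1), (A2) and (P). -/
def IsArithmeticMatroid (rk m : Finset E → ℕ) : Prop :=
  IsRankFn rk ∧ (∀ X : Finset E, 0 < m X) ∧ AxiomA1 rk m ∧ AxiomA2 rk m ∧ AxiomP rk m

/-- The gcd property: `m X = gcd { m I : I ⊆ X, |I| = rk I = rk X }`. -/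
def GcdProperty (rk m : Finset E → ℕ) : Prop :=
  ∀ X : Finset E,
    m X = (X.powerset.filter (fun I => I.card = rk I ∧ rk I = rk X)).gcd m

/-- The strong gcd property: `m X = gcd { m B : B basis, |B ∩ X| = rk X }`. -/
def StrongGcdProperty (rk m : Finset E → ℕ) : Prop :=
  ∀ X : Finset E,
    m X = ((Finset.univ : Finset (Finset E)).filter
      (fun B => IsBasis rk B ∧ (B ∩ X).card = rk X)).gcd m

/-- The rank function of the dual matroid: `rk* X = |X| - rk E + rk (E \ X)`. -/
def dualRk (rk : Finset E → ℕ) : Finset E → ℕ :=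
  fun X => X.card + rk Xᶜ - rk (Finset.univ : Finset E)

/-- The multiplicity function of the dual arithmetic matroid: `m* X = m (E \ X)`. -/
def dualM (m : Finset E → ℕ) : Finset E → ℕ := fun X => m Xᶜ

/-- The set of bases of the matroid, as a `Finset`. -/
noncomputable def basesFinset (rk : Finset E → ℕ) : Finset (Finset E) :=
  (Finset.univ : Finset (Finset E)).filter (IsBasis rk)

/-- The multiplicity function of the reduction:
`m̄ X = gcd { m B : B basis, rk X = |X ∩ B| } / gcd { m B : B basis }`. -/
noncomputable def reducedM (rk m : Finset E → ℕ) : Finset E → ℕ := fun X =>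
  ((basesFinset rk).filter (fun B => (X ∩ B).card = rk X)).gcd m /
    (basesFinset rk).gcd m

/-- `B_(X,Y)`: the set of pairs `(B₁, B₂)` of bases with `rk X = |X ∩ B₁|` and
`rk Y = |Y ∩ B₂|`. -/
def BasisPairs (rk : Finset E → ℕ) (X Y : Finset E) : Set (Finset E × Finset E) :=
  {p | IsBasis rk p.1 ∧ IsBasis rk p.2 ∧ rk X = (X ∩ p.1).card ∧ rk Y = (Y ∩ p.2).card}

end Arithmat
section Auxx

variable {E : Type*} [Fintype E] [DecidableEq E]

lemma rk_mono' (rk : Finset E → ℕ) (h : IsRankFn rk) {X Y : Finset E} (hXY : X ⊆ Y) :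
    rk X ≤ rk Y := by
  have key : ∀ S : Finset E, rk X ≤ rk (X ∪ S) := by
    intro S
    induction S using Finset.induction_on with
    | empty => simp
    | @insert a S ha ih =>
      calc rk X ≤ rk (X ∪ S) := ih
        _ ≤ rk (insert a (X ∪ S)) := (h.2.2 (X ∪ S) a).1
        _ = rk (X ∪ insert a S) := by rw [Finset.union_insert]
  calc rk X ≤ rk (X ∪ Y) := key Y
    _ = rk Y := by rw [Finset.union_eq_right.mpr hXY]

lemma rk_span' (rk : Finset E → ℕ) (h : IsRankFn rk) (B : Finset E)
    (S : Finset E) (hS : ∀ e ∈ S, rk (insert e B) = rk B) : rk (B ∪ S) = rk B := by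
  induction S using Finset.induction_on with
  | empty => simp
  | @insert a S ha ih =>
    have h1 : rk (B ∪ S) = rk B := ih (fun e he => hS e (Finset.mem_insert_of_mem he))
    have h2 : rk (insert a B) = rk B := hS a (Finset.mem_insert_self a S)
    have hsub := h.2.1 (B ∪ S) (insert a B)
    have hu : (B ∪ S) ∪ insert a B = B ∪ insert a S := by ext x; simp; tauto
    rw [hu] at hsub
    have hi : B ⊆ (B ∪ S) ∩ insert a B := by
      intro x hx; simp [hx]
    have hmono : rk B ≤ rk ((B ∪ S) ∩ insert a B) := rk_mono' rk h hi
    have hge : rk B ≤ rk (B ∪ insert a S) := rk_mono' rk h Finset.subset_union_left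
    omega

lemma exists_basis' (rk : Finset E → ℕ) (h : IsRankFn rk) : ∃ B : Finset E, IsBasis rk B := by
  classical
  have hne : ((Finset.univ : Finset (Finset E)).filter (fun I => I.card = rk I)).Nonempty := by
    refine ⟨∅, ?_⟩
    have h0 : rk ∅ ≤ 0 := by simpa using h.1 ∅
    simp [Nat.le_zero.mp h0]
  obtain ⟨B, hBmem, hBmax⟩ := Finset.exists_max_image _ Finset.card hne
  simp only [Finset.mem_filter, Finset.mem_univ, true_and] at hBmem
  have hins : ∀ e : E, rk (insert e B) = rk B := by
    intro e
    by_contra hne'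
    have hle := (h.2.2 B e).2
    have hge := (h.2.2 B e).1
    have heq : rk (insert e B) = rk B + 1 := by omega
    have heB : e ∉ B := by
      intro heB
      rw [Finset.insert_eq_self.mpr heB] at heq
      omega
    have hcard : (insert e B).card = rk (insert e B) := by
      rw [Finset.card_insert_of_notMem heB, heq, hBmem]
    have := hBmax (insert e B) (by simp [hcard])
    rw [Finset.card_insert_of_notMem heB] at this
    omega
  have hspan : rk (B ∪ Finset.univ) = rk B :=
    rk_span' rk h B Finset.univ (fun e _ => hins e)
  refine ⟨B, hBmem, ?_⟩
  rw [← hspan]; congr 1; simp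

end Auxx

/-- The reduction `M̄` of a quasi-arithmetic matroid is
torsion-free (`m̄ ∅ = 1`) and surjective (`m̄ E = 1`), and it satisfies the strong
gcd property. -/
theorem reducedM_torsionFree_surjective_strongGcd
    {E : Type*} [Fintype E] [DecidableEq E]
    (rk m : Finset E → ℕ) (hM : IsQuasiArithmeticMatroid rk m) :
    reducedM rk m (∅ : Finset E) = 1 ∧
    reducedM rk m (Finset.univ : Finset E) = 1 ∧
    StrongGcdProperty rk (reducedM rk m) := by
  classical
  obtain ⟨hrk, hpos, hA1, hA2⟩ := hM
  set g := (basesFinset rk).gcd m with hg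
  obtain ⟨B0, hB0⟩ := exists_basis' rk hrk
  have hB0mem : B0 ∈ basesFinset rk := by simp [basesFinset, hB0]
  have hgpos : 0 < g := by
    rcases Nat.eq_zero_or_pos g with h0 | h
    · have := (Finset.gcd_eq_zero_iff.mp h0) B0 hB0mem
      exact absurd this (hpos B0).ne'
    · exact h
  have hgdvd : ∀ B ∈ basesFinset rk, g ∣ m B := fun B hB => Finset.gcd_dvd hB
  have hrkempty : rk (∅ : Finset E) = 0 := Nat.le_zero.mp (by simpa using hrk.1 ∅)
  have h1 : reducedM rk m (∅ : Finset E) = 1 := by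
    unfold reducedM
    have heq : (basesFinset rk).filter
        (fun B => ((∅ : Finset E) ∩ B).card = rk (∅ : Finset E)) = basesFinset rk :=
      Finset.filter_true_of_mem (fun B _ => by simp [hrkempty])
    rw [heq, ← hg, Nat.div_self hgpos]
  have h2 : reducedM rk m (Finset.univ : Finset E) = 1 := by
    unfold reducedM
    have heq : (basesFinset rk).filter
        (fun B => ((Finset.univ : Finset E) ∩ B).card = rk (Finset.univ : Finset E))
        = basesFinset rk := by
      apply Finset.filter_true_of_mem
      intro B hB
      simp only [basesFinset, Finset.mem_filter] at hB
      rw [Finset.univ_inter, hB.2.1, hB.2.2]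
    rw [heq, ← hg, Nat.div_self hgpos]
  have hred_basis : ∀ B : Finset E, IsBasis rk B → reducedM rk m B = m B / g := by
    intro B hB
    unfold reducedM
    have hfilter : (basesFinset rk).filter (fun B' => (B ∩ B').card = rk B) = {B} := by
      ext B'
      simp only [Finset.mem_filter, Finset.mem_singleton, basesFinset, Finset.mem_univ, true_and]
      constructor
      · rintro ⟨hB', hcard⟩
        have h1 : rk B = B.card := hB.1.symm
        have hsub : B ∩ B' ⊆ B := Finset.inter_subset_left
        have hle : B.card ≤ (B ∩ B').card := by omega
        have hBB' : B ∩ B' = B := Finset.eq_of_subset_of_card_le hsub hle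
        have hBsub : B ⊆ B' := by rw [← hBB']; exact Finset.inter_subset_right
        have hc1 : B'.card = rk B' := hB'.1
        have hc2 : rk B' = rk (Finset.univ : Finset E) := hB'.2
        have hc3 : rk B = rk (Finset.univ : Finset E) := hB.2
        have hc4 : B.card = rk B := hB.1
        exact (Finset.eq_of_subset_of_card_le hBsub (by omega)).symm
      · rintro rfl
        exact ⟨hB, by rw [Finset.inter_self, ← hB.1]⟩
    rw [hfilter, ← hg, Finset.gcd_singleton]
    simp
  have h3 : StrongGcdProperty rk (reducedM rk m) := by
    intro X
    set F := (Finset.univ : Finset (Finset E)).filter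
      (fun B => IsBasis rk B ∧ (B ∩ X).card = rk X) with hF
    have hFmem : ∀ B ∈ F, IsBasis rk B := by
      intro B hB
      simp only [hF, Finset.mem_filter] at hB
      exact hB.2.1
    have hFsub : ∀ B ∈ F, B ∈ basesFinset rk := by
      intro B hB
      simp [basesFinset, hFmem B hB]
    have step1 : F.gcd (reducedM rk m) = F.gcd (fun B => m B / g) :=
      Finset.gcd_congr rfl (fun B hB => hred_basis B (hFmem B hB))
    have step2 : F.gcd m = g * F.gcd (fun B => m B / g) := by
      have : F.gcd m = F.gcd (fun B => g * (m B / g)) :=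
        Finset.gcd_congr rfl (fun B hB => (Nat.mul_div_cancel' (hgdvd B (hFsub B hB))).symm)
      rw [this, Finset.gcd_mul_left]
      simp
    have step3 : F.gcd m
        = ((basesFinset rk).filter (fun B => (X ∩ B).card = rk X)).gcd m := by
      congr 1
      rw [basesFinset, Finset.filter_filter]
      apply Finset.filter_congr
      intro B _
      constructor
      · rintro ⟨hb, hc⟩; exact ⟨hb, by rwa [Finset.inter_comm]⟩
      · rintro ⟨hb, hc⟩; exact ⟨hb, by rwa [Finset.inter_comm]⟩
    show reducedM rk m X = F.gcd (reducedM rk m)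
    rw [step1]
    unfold reducedM
    rw [← hg, ← step3, step2, Nat.mul_div_cancel_left _ hgpos]
  exact ⟨h1, h2, h3⟩
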